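/- Let 0 < ε ≤ 1, let k ≥ 1 be an integer, and set δ = ε/(2k). Let S_0 be a directed hypergraph on a finite vertex set V, and for each i ∈ {1, …, k} let C_i and S_i be directed hypergraphs on V such that: (a) the hyperedge sets of C_i and S_i are disjoint and both are contained in the hyperedge set of S_{i−1}; and (b) the union C_i ∪ S_i (disjoint union of hyperedge sets, each hyperedge keeping its own weight) is a (1±δ)-spectral hypersparsifier of S_{i−1}. Then the hypergraphs C_1, C_2, …, C_k, S_k have pairwise disjoint hyperedge sets, and the union C_1 ∪ C_2 ∪ ⋯ ∪ C_k ∪ S_k is a (1±ε)-spectral hypersparsifier of S_0. -/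

import Mathlib

/-- A directed hypergraph on vertex type `V` with hyperedges drawn from type `E`:
a finite set of hyperedges, each with a nonempty tail and head (finite sets of
vertices) and a nonnegative weight. -/
structure DirHypergraph (V : Type*) (E : Type*) where
  edges : Finset E
  tail : E → Finset V
  head : E → Finset V
  w : E → ℝ
  tail_nonempty : ∀ e ∈ edges, (tail e).Nonempty
  head_nonempty : ∀ e ∈ edges, (head e).Nonempty
  w_nonneg : ∀ e ∈ edges, 0 ≤ w e

/-- The energy `Q_H(x) = Σ_{e ∈ E} w(e) · max_{(u,v) ∈ tail(e) × head(e)} (max(x u − x v, 0))²`. -/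
noncomputable def energy {V E : Type*} (H : DirHypergraph V E) (x : V → ℝ) : ℝ :=
  ∑ e ∈ H.edges, H.w e *
    sSup ((fun p : V × V => max (x p.1 - x p.2) 0 ^ 2) ''
      ((H.tail e : Set V) ×ˢ (H.head e : Set V)))

/-- `Ht` is a (1±ε)-spectral hypersparsifier of `H`: its hyperedge set is a subset of
that of `H` (with the same tails and heads), and its energy is within a `(1±ε)` factor
of the energy of `H` on every vector. -/
def IsSparsifier {V E : Type*} (ε : ℝ) (H Ht : DirHypergraph V E) : Prop :=
  Ht.edges ⊆ H.edges ∧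
  (∀ e ∈ Ht.edges, Ht.tail e = H.tail e ∧ Ht.head e = H.head e) ∧
  ∀ x : V → ℝ,
    (1 - ε) * energy H x ≤ energy Ht x ∧ energy Ht x ≤ (1 + ε) * energy H x

/-- `U` is the union of `H1` and `H2`: its hyperedge set is `E1 ∪ E2` and it agrees
with `H1` on `E1` and with `H2` on `E2` (weights, tails and heads). -/
def IsUnion {V E : Type*} [DecidableEq E] (U H1 H2 : DirHypergraph V E) : Prop :=
  U.edges = H1.edges ∪ H2.edges ∧
  (∀ e ∈ H1.edges, U.w e = H1.w e ∧ U.tail e = H1.tail e ∧ U.head e = H1.head e) ∧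
  (∀ e ∈ H2.edges, U.w e = H2.w e ∧ U.tail e = H2.tail e ∧ U.head e = H2.head e)

/-- `U` is the union of the family `Hs`. -/
def IsUnionFamily {V E ι : Type*} [DecidableEq E] [Fintype ι] (U : DirHypergraph V E)
    (Hs : ι → DirHypergraph V E) : Prop :=
  U.edges = Finset.univ.biUnion (fun i => (Hs i).edges) ∧
  ∀ i, ∀ e ∈ (Hs i).edges,
    U.w e = (Hs i).w e ∧ U.tail e = (Hs i).tail e ∧ U.head e = (Hs i).head e

noncomputable def eterm {V E : Type*} (H : DirHypergraph V E) (x : V → ℝ) (e : E) : ℝ :=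
  H.w e * sSup ((fun p : V × V => max (x p.1 - x p.2) 0 ^ 2) ''
      ((H.tail e : Set V) ×ˢ (H.head e : Set V)))

lemma energy_eq {V E : Type*} (H : DirHypergraph V E) (x : V → ℝ) :
    energy H x = ∑ e ∈ H.edges, eterm H x e := rfl

lemma eterm_nonneg {V E : Type*} {H : DirHypergraph V E} {x : V → ℝ} {e : E}
    (he : e ∈ H.edges) : 0 ≤ eterm H x e := by
  apply mul_nonneg (H.w_nonneg e he)
  obtain ⟨u, hu⟩ := H.tail_nonempty e he
  obtain ⟨v, hv⟩ := H.head_nonempty e he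
  have hmem : ((u, v) : V × V) ∈ ((H.tail e : Set V) ×ˢ (H.head e : Set V)) :=
    ⟨by simpa using hu, by simpa using hv⟩
  refine le_trans (by positivity) (le_csSup ?_ (Set.mem_image_of_mem _ hmem))
  exact (((H.tail e).finite_toSet.prod (H.head e).finite_toSet).image _).bddAbove

lemma energy_nonneg {V E : Type*} (H : DirHypergraph V E) (x : V → ℝ) :
    0 ≤ energy H x :=
  Finset.sum_nonneg fun _ he => eterm_nonneg he

lemma eterm_congr {V E : Type*} {H H' : DirHypergraph V E} {x : V → ℝ} {e : E}
    (hw : H.w e = H'.w e) (ht : H.tail e = H'.tail e) (hh : H.head e = H'.head e) :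
    eterm H x e = eterm H' x e := by
  unfold eterm; rw [hw, ht, hh]

lemma energy_union {V E : Type*} [DecidableEq E] {U A B : DirHypergraph V E}
    (h : IsUnion U A B) (hd : Disjoint A.edges B.edges) (x : V → ℝ) :
    energy U x = energy A x + energy B x := by
  rw [energy_eq, energy_eq, energy_eq, h.1, Finset.sum_union hd]
  congr 1
  · exact Finset.sum_congr rfl fun e he =>
      eterm_congr (h.2.1 e he).1 (h.2.1 e he).2.1 (h.2.1 e he).2.2
  · exact Finset.sum_congr rfl fun e he =>
      eterm_congr (h.2.2 e he).1 (h.2.2 e he).2.1 (h.2.2 e he).2.2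

lemma energy_unionFamily {V E ι : Type*} [DecidableEq E] [Fintype ι]
    {U : DirHypergraph V E} {Hs : ι → DirHypergraph V E}
    (h : IsUnionFamily U Hs)
    (hd : ∀ i j, i ≠ j → Disjoint (Hs i).edges (Hs j).edges) (x : V → ℝ) :
    energy U x = ∑ i, energy (Hs i) x := by
  rw [energy_eq, h.1, Finset.sum_biUnion (fun i _ j _ hij => hd i j hij)]
  exact Finset.sum_congr rfl fun i _ => Finset.sum_congr rfl fun e he =>
    eterm_congr (h.2 i e he).1 (h.2 i e he).2.1 (h.2 i e he).2.2

lemma pow_one_add_le {δ : ℝ} (hδ : 0 ≤ δ) :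
    ∀ n : ℕ, 2 * n * δ ≤ 1 → (1 + δ) ^ n ≤ 1 + 2 * n * δ := by
  intro n
  induction n with
  | zero => simp
  | succ n ih =>
    intro hn
    have hn' : 2 * (n : ℝ) * δ ≤ 1 := by
      refine le_trans ?_ hn
      have : (n : ℝ) ≤ (n + 1 : ℕ) := by push_cast; linarith
      nlinarith
    have h1 : (1 + δ) ^ (n + 1) = (1 + δ) ^ n * (1 + δ) := pow_succ _ _
    have h2 : (1 + δ) ^ n ≤ 1 + 2 * n * δ := ih hn'
    have h3 : (0:ℝ) ≤ 1 + δ := by linarith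
    have h4 : (1 + δ) ^ n * (1 + δ) ≤ (1 + 2 * n * δ) * (1 + δ) := by nlinarith
    have h5 : (1 + 2 * (n:ℝ) * δ) * (1 + δ) ≤ 1 + 2 * ((n:ℕ) + 1 : ℕ) * δ := by
      push_cast
      nlinarith
    push_cast at h5 ⊢
    nlinarith [pow_nonneg h3 n]

/-- correctness of the recursive coreset-and-sample construction.
If at each level `i ∈ {1, …, k}` the coreset `C i` and sampled hypergraph `S i` have
disjoint hyperedge sets, both contained in the hyperedge set of `S (i−1)`, and their
union is a (1±ε/(2k))-sparsifier of `S (i−1)`, then `C 1, …, C k, S k` have pairwise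
disjoint hyperedge sets and their union is a (1±ε)-sparsifier of `S 0`. -/
theorem coreset_and_sample_correct {V E : Type*} [Fintype V] [DecidableEq E]
    (ε : ℝ) (hε0 : 0 < ε) (hε1 : ε ≤ 1)
    (k : ℕ) (hk : 1 ≤ k)
    (C S : ℕ → DirHypergraph V E)
    (hdisj : ∀ i, 1 ≤ i → i ≤ k → Disjoint (C i).edges (S i).edges)
    (hCsub : ∀ i, 1 ≤ i → i ≤ k → (C i).edges ⊆ (S (i - 1)).edges)
    (hSsub : ∀ i, 1 ≤ i → i ≤ k → (S i).edges ⊆ (S (i - 1)).edges)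
    (hsp : ∀ i, 1 ≤ i → i ≤ k → ∃ U : DirHypergraph V E,
      IsUnion U (C i) (S i) ∧ IsSparsifier (ε / (2 * k)) (S (i - 1)) U) :
    -- the hypergraphs `C 1, …, C k, S k` have pairwise disjoint hyperedge sets
    ((Set.Icc 1 k).Pairwise fun i j => Disjoint (C i).edges (C j).edges) ∧
    (∀ i, 1 ≤ i → i ≤ k → Disjoint (C i).edges (S k).edges) ∧
    -- their union exists
    (∃ U : DirHypergraph V E,
      IsUnionFamily U (fun i : Fin (k + 1) =>
        if (i : ℕ) < k then C ((i : ℕ) + 1) else S k)) ∧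
    -- and their union is a (1±ε)-spectral hypersparsifier of `S 0`
    ∀ U : DirHypergraph V E,
      IsUnionFamily U (fun i : Fin (k + 1) =>
        if (i : ℕ) < k then C ((i : ℕ) + 1) else S k) →
      IsSparsifier ε (S 0) U := by
  classical
  have hkpos : (0:ℝ) < (k:ℝ) := by exact_mod_cast hk
  set δ : ℝ := ε / (2 * (k:ℝ)) with hδdef
  have hδ0 : 0 < δ := by positivity
  have hδk : 2 * (k:ℝ) * δ = ε := by rw [hδdef]; field_simp [hkpos.ne']
  have hδhalf : δ ≤ 1/2 := by
    rw [hδdef]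
    rw [div_le_iff₀ (by positivity)]
    have hk1 : (1:ℝ) ≤ (k:ℝ) := by exact_mod_cast hk
    nlinarith
  -- normalized sparsifier hypothesis
  have hsp' : ∀ n, n < k → ∃ U : DirHypergraph V E,
      IsUnion U (C (n+1)) (S (n+1)) ∧ IsSparsifier δ (S n) U := by
    intro n hn
    have h := hsp (n+1) (by omega) (by omega)
    simpa using h
  -- chain of inclusions
  have hSchain : ∀ j, j ≤ k → ∀ i, i ≤ j → (S j).edges ⊆ (S i).edges := by
    intro j
    induction j with
    | zero => intro _ i hi; interval_cases i; exact subset_rfl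
    | succ n ih =>
      intro hjk i hi
      rcases Nat.eq_or_lt_of_le hi with h | h
      · rw [h]
      · have h1 : (S (n+1)).edges ⊆ (S n).edges := by
          simpa using hSsub (n+1) (by omega) hjk
        exact h1.trans (ih (by omega) i (by omega))
  -- tails and heads of S j agree with S 0
  have hSth : ∀ j, j ≤ k → ∀ e ∈ (S j).edges,
      (S j).tail e = (S 0).tail e ∧ (S j).head e = (S 0).head e := by
    intro j
    induction j with
    | zero => intro _ e _; exact ⟨rfl, rfl⟩
    | succ n ih =>
      intro hjk e he
      obtain ⟨U, hU, hUs⟩ := hsp' n (by omega)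
      have heU : e ∈ U.edges := by rw [hU.1]; exact Finset.mem_union_right _ he
      have h1 := hUs.2.1 e heU
      have h2 := hU.2.2 e he
      have he' : e ∈ (S n).edges := by
        have := hSsub (n+1) (by omega) hjk
        simpa using this he
      obtain ⟨h3, h4⟩ := ih (by omega) e he'
      exact ⟨by rw [← h2.2.1, h1.1, h3], by rw [← h2.2.2, h1.2, h4]⟩
  -- tails and heads of C (n+1) agree with S 0
  have hCth : ∀ n, n < k → ∀ e ∈ (C (n+1)).edges,
      (C (n+1)).tail e = (S 0).tail e ∧ (C (n+1)).head e = (S 0).head e := by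
    intro n hn e he
    obtain ⟨U, hU, hUs⟩ := hsp' n hn
    have heU : e ∈ U.edges := by rw [hU.1]; exact Finset.mem_union_left _ he
    have h1 := hUs.2.1 e heU
    have h2 := hU.2.1 e he
    have he' : e ∈ (S n).edges := by
      have := hCsub (n+1) (by omega) (by omega)
      simpa using this he
    obtain ⟨h3, h4⟩ := hSth n (by omega) e he'
    exact ⟨by rw [← h2.2.1, h1.1, h3], by rw [← h2.2.2, h1.2, h4]⟩
  -- disjointness of coresets
  have hCC : ∀ i j, 1 ≤ i → i < j → j ≤ k → Disjoint (C i).edges (C j).edges := by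
    intro i j h1 hij hjk
    have h2 : (C j).edges ⊆ (S i).edges := by
      have h3 := hCsub j (by omega) hjk
      have h4 : (S (j-1)).edges ⊆ (S i).edges := hSchain (j-1) (by omega) i (by omega)
      exact h3.trans h4
    exact (hdisj i h1 (by omega)).mono_right h2
  have hCSk : ∀ i, 1 ≤ i → i ≤ k → Disjoint (C i).edges (S k).edges := by
    intro i h1 hik
    exact (hdisj i h1 hik).mono_right (hSchain k le_rfl i hik)
  set Hs : Fin (k+1) → DirHypergraph V E :=
    (fun i : Fin (k + 1) => if (i : ℕ) < k then C ((i : ℕ) + 1) else S k) with hHs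
  -- family pairwise disjoint
  have hHsdisj : ∀ i j : Fin (k+1), i ≠ j → Disjoint (Hs i).edges (Hs j).edges := by
    intro i j hij
    have hij' : (i:ℕ) ≠ (j:ℕ) := fun h => hij (Fin.ext h)
    by_cases hi : (i:ℕ) < k <;> by_cases hj : (j:ℕ) < k <;>
      simp only [hHs, if_pos, if_neg, hi, hj, if_true, if_false]
    · rcases Nat.lt_or_ge (i:ℕ) (j:ℕ) with h | h
      · exact hCC ((i:ℕ)+1) ((j:ℕ)+1) (by omega) (by omega) (by omega)
      · exact (hCC ((j:ℕ)+1) ((i:ℕ)+1) (by omega) (by omega) (by omega)).symm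
    · exact hCSk ((i:ℕ)+1) (by omega) (by omega)
    · exact (hCSk ((j:ℕ)+1) (by omega) (by omega)).symm
    · exfalso; apply hij'; omega
  -- edges of each family member are inside S 0
  have hHssub : ∀ i : Fin (k+1), (Hs i).edges ⊆ (S 0).edges := by
    intro i
    by_cases hi : (i:ℕ) < k <;> simp only [hHs, hi, if_true, if_false]
    · exact (hCsub ((i:ℕ)+1) (by omega) (by omega)).trans
        (by simpa using hSchain (i:ℕ) (by omega) 0 (Nat.zero_le _))
    · exact hSchain k le_rfl 0 (Nat.zero_le _)
  have hHsth : ∀ i : Fin (k+1), ∀ e ∈ (Hs i).edges,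
      (Hs i).tail e = (S 0).tail e ∧ (Hs i).head e = (S 0).head e := by
    intro i
    by_cases hi : (i:ℕ) < k <;> simp only [hHs, hi, if_true, if_false]
    · exact hCth (i:ℕ) hi
    · exact hSth k le_rfl
  -- construct an explicit union
  have hexU : ∃ U : DirHypergraph V E, IsUnionFamily U Hs := by
    have hzero : (0:ℕ) < k + 1 := by omega
    set pick : E → Fin (k+1) := fun e =>
      if h : ∃ i, e ∈ (Hs i).edges then h.choose else ⟨0, hzero⟩ with hpickdef
    have hpickmem : ∀ e, (∃ i, e ∈ (Hs i).edges) → e ∈ (Hs (pick e)).edges := by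
      intro e h
      simp only [hpickdef, dif_pos h]
      exact h.choose_spec
    have hpick : ∀ (i : Fin (k+1)) e, e ∈ (Hs i).edges → pick e = i := by
      intro i e he
      have hex : ∃ j, e ∈ (Hs j).edges := ⟨i, he⟩
      by_contra hne
      exact Finset.disjoint_left.mp (hHsdisj _ _ hne) (hpickmem e hex) he
    refine ⟨⟨Finset.univ.biUnion fun i => (Hs i).edges,
      fun e => (Hs (pick e)).tail e, fun e => (Hs (pick e)).head e,
      fun e => (Hs (pick e)).w e, ?_, ?_, ?_⟩, rfl, ?_⟩
    · intro e he
      obtain ⟨i, _, hi⟩ := Finset.mem_biUnion.mp he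
      exact (Hs (pick e)).tail_nonempty e (hpickmem e ⟨i, hi⟩)
    · intro e he
      obtain ⟨i, _, hi⟩ := Finset.mem_biUnion.mp he
      exact (Hs (pick e)).head_nonempty e (hpickmem e ⟨i, hi⟩)
    · intro e he
      obtain ⟨i, _, hi⟩ := Finset.mem_biUnion.mp he
      exact (Hs (pick e)).w_nonneg e (hpickmem e ⟨i, hi⟩)
    · intro i e he
      simp [hpick i e he]
  refine ⟨?_, hCSk, hexU, ?_⟩
  · intro i hi j hj hij
    rw [Set.mem_Icc] at hi hj
    rcases lt_or_gt_of_ne hij with h | h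
    · exact hCC i j hi.1 h hj.2
    · exact (hCC j i hj.1 h hi.2).symm
  intro U hUF
  refine ⟨?_, ?_, ?_⟩
  · rw [hUF.1]
    exact Finset.biUnion_subset.mpr fun i _ => hHssub i
  · intro e he
    rw [hUF.1] at he
    obtain ⟨i, _, hi⟩ := Finset.mem_biUnion.mp he
    obtain ⟨h1, h2⟩ := hHsth i e hi
    obtain ⟨_, h3, h4⟩ := hUF.2 i e hi
    exact ⟨h3.trans h1, h4.trans h2⟩
  intro x
  set c : ℕ → ℝ := fun n => energy (C n) x with hc
  set a : ℕ → ℝ := fun n => energy (S n) x with ha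
  set T : ℕ → ℝ := fun n => (∑ i ∈ Finset.range n, c (i+1)) + a n with hT
  have hUx : energy U x = T k := by
    rw [energy_unionFamily hUF hHsdisj x, Fin.sum_univ_castSucc]
    have hlast : Hs (Fin.last k) = S k := by
      simp [hHs, Fin.val_last]
    have hcast : ∀ i : Fin k, Hs i.castSucc = C ((i:ℕ)+1) := by
      intro i
      simp [hHs, Fin.coe_castSucc, i.isLt]
    rw [hlast]
    simp only [hT, ha]
    congr 1
    rw [← Fin.sum_univ_eq_sum_range (fun i => c (i+1)) k]
    exact Finset.sum_congr rfl fun i _ => by rw [hcast i]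
  have hT0 : T 0 = a 0 := by simp [hT]
  have hanonneg : ∀ n, 0 ≤ a n := fun n => energy_nonneg _ _
  have haleT : ∀ n, a n ≤ T n := by
    intro n
    have : 0 ≤ ∑ i ∈ Finset.range n, c (i+1) :=
      Finset.sum_nonneg fun i _ => energy_nonneg _ _
    simp only [hT]; linarith
  have key : ∀ n, n < k → (1-δ) * T n ≤ T (n+1) ∧ T (n+1) ≤ (1+δ) * T n := by
    intro n hn
    obtain ⟨Un, hUn, hUns⟩ := hsp' n hn
    have hE : energy Un x = c (n+1) + a (n+1) :=
      energy_union hUn (hdisj (n+1) (by omega) (by omega)) x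
    obtain ⟨hlo, hhi⟩ := hUns.2.2 x
    rw [hE] at hlo hhi
    have hTs : T (n+1) = T n - a n + (c (n+1) + a (n+1)) := by
      simp only [hT, Finset.sum_range_succ]; ring
    have h1 := haleT n
    have h2 := hanonneg n
    constructor <;> rw [hTs] <;> nlinarith
  have hmain : ∀ n, n ≤ k → (1-δ)^n * a 0 ≤ T n ∧ T n ≤ (1+δ)^n * a 0 := by
    intro n
    induction n with
    | zero => intro _; simp [hT0]
    | succ n ih =>
      intro hn
      obtain ⟨ihlo, ihhi⟩ := ih (by omega)
      obtain ⟨klo, khi⟩ := key n (by omega)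
      constructor
      · calc (1-δ)^(n+1) * a 0 = (1-δ) * ((1-δ)^n * a 0) := by ring
          _ ≤ (1-δ) * T n := by
              apply mul_le_mul_of_nonneg_left ihlo; linarith
          _ ≤ T (n+1) := klo
      · calc T (n+1) ≤ (1+δ) * T n := khi
          _ ≤ (1+δ) * ((1+δ)^n * a 0) := by
              apply mul_le_mul_of_nonneg_left ihhi; linarith
          _ = (1+δ)^(n+1) * a 0 := by ring
  obtain ⟨hlo, hhi⟩ := hmain k le_rfl
  have ha0 : 0 ≤ a 0 := hanonneg 0
  have hbern : 1 - (k:ℝ) * δ ≤ (1-δ)^k := by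
    have := one_add_mul_le_pow (a := -δ) (by linarith) k
    calc 1 - (k:ℝ) * δ = 1 + k * (-δ) := by ring
      _ ≤ (1 + -δ)^k := this
      _ = (1-δ)^k := by ring_nf
  have hpow : (1+δ)^k ≤ 1 + ε := by
    have h1 : 2 * (k:ℝ) * δ ≤ 1 := by rw [hδk]; exact hε1
    have := pow_one_add_le hδ0.le k h1
    rw [hδk] at this
    exact this
  have hεδ : (k:ℝ) * δ = ε / 2 := by linarith
  constructor
  · have h1 : (1 - ε) * a 0 ≤ (1-δ)^k * a 0 := by
      apply mul_le_mul_of_nonneg_right _ ha0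
      rw [← hδk]; nlinarith
    calc (1 - ε) * energy (S 0) x = (1 - ε) * a 0 := rfl
      _ ≤ T k := h1.trans hlo
      _ = energy U x := hUx.symm
  · have h2 : (1+δ)^k * a 0 ≤ (1 + ε) * a 0 :=
      mul_le_mul_of_nonneg_right hpow ha0
    calc energy U x = T k := hUx
      _ ≤ (1 + ε) * a 0 := hhi.trans h2
      _ = (1 + ε) * energy (S 0) x := rfl
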